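/- arXiv:1401.6319 — 4 statements merged into one kernel-verified Lean document; each statement's English description precedes it below -/
import Mathlib

section
/- Let Q be an m × n real matrix with m ≤ n. Suppose the transpose Qᵀ can be reduced to the empty (0 × 0) matrix by repeatedly applying the following 'column reduction' step: if some row of the current matrix has exactly one nonzero entry, located in column j, remove column j, and then remove all rows that have become entirely zero. Then Q has full rank m. -/
open scoped Classical

/-- One step of the column reduction procedure on a fixed matrix `Q`,
acting on a state `(R, Cs)` of currently retained rows and columns:
remove all "innocuous" columns (columns `j ∈ Cs` such that some retained row has
its unique nonzero entry, among retained columns, in column `j`), then remove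
all retained rows that have become entirely zero. -/
noncomputable def crStep {m n : ℕ} (Q : Matrix (Fin m) (Fin n) ℝ)
    (st : Finset (Fin m) × Finset (Fin n)) : Finset (Fin m) × Finset (Fin n) :=
  let J : Finset (Fin n) :=
    st.2.filter (fun j => ∃ i ∈ st.1, Q i j ≠ 0 ∧ ∀ j' ∈ st.2, j' ≠ j → Q i j' = 0)
  let C' := st.2 \ J
  (st.1.filter (fun i => ∃ j ∈ C', Q i j ≠ 0), C')

/-- The column reduction procedure, started from the full matrix, terminates
in the void (0 × 0) matrix. -/
def crReducesToVoid {m n : ℕ} (Q : Matrix (Fin m) (Fin n) ℝ) : Prop :=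
  ∃ k : ℕ, (crStep Q)^[k] (Finset.univ, Finset.univ) = (∅, ∅)

/-!
A kernel vector `v` of `Q` vanishes on every column removed by the procedure: if `v` is
supported on the retained columns and some row has its only retained nonzero entry in
column `j`, that row of `Q *ᵥ v = 0` reads `Q i j * v j = 0`. Reducing to the void matrix
removes every column, so `Q` has trivial kernel; applied to `Qᵀ` this makes the rows of
`Q` linearly independent.
-/

section ColumnReduction

open Matrix

variable {m n : ℕ} {Q : Matrix (Fin m) (Fin n) ℝ} {v : Fin n → ℝ}

lemma eq_zero_of_notMem_crStep (hv : Q *ᵥ v = 0) {st : Finset (Fin m) × Finset (Fin n)}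
    (hst : ∀ j ∉ st.2, v j = 0) {j : Fin n} (hj : j ∉ (crStep Q st).2) : v j = 0 := by
  simp only [crStep, Finset.mem_sdiff, not_and, not_not] at hj
  by_cases hjC : j ∈ st.2
  · obtain ⟨-, i, -, hij, honly⟩ := Finset.mem_filter.mp (hj hjC)
    have hrow : (Q *ᵥ v) i = Q i j * v j := by
      refine Finset.sum_eq_single j (fun j' _ hj' => ?_)
        (fun hj => absurd (Finset.mem_univ j) hj)
      change Q i j' * v j' = 0
      by_cases hj'C : j' ∈ st.2
      · rw [honly j' hj'C hj', zero_mul]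
      · rw [hst j' hj'C, mul_zero]
    rw [hv, Pi.zero_apply] at hrow
    exact (mul_eq_zero.mp hrow.symm).resolve_left hij
  · exact hst j hjC

lemma eq_zero_of_notMem_iterate_crStep (hv : Q *ᵥ v = 0) (k : ℕ) {j : Fin n}
    (hj : j ∉ ((crStep Q)^[k] (Finset.univ, Finset.univ)).2) : v j = 0 := by
  induction k generalizing j with
  | zero => exact absurd (Finset.mem_univ j) hj
  | succ k ih =>
    rw [Function.iterate_succ_apply'] at hj
    exact eq_zero_of_notMem_crStep hv (fun _ => ih) hj

lemma linearIndependent_col_of_crReducesToVoid (h : crReducesToVoid Q) :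
    LinearIndependent ℝ Q.col := by
  obtain ⟨k, hk⟩ := h
  rw [← mulVec_injective_iff, ← coe_mulVecLin,
    ← LinearMap.ker_eq_bot, LinearMap.ker_eq_bot']
  intro v hv
  funext j
  exact eq_zero_of_notMem_iterate_crStep hv k (by simp [hk])

end ColumnReduction

theorem stmt_0_general {m n : ℕ} (Q : Matrix (Fin m) (Fin n) ℝ)
    (h : crReducesToVoid Q.transpose) : Q.rank = m := by
  have hrows : LinearIndependent ℝ Q.row := linearIndependent_col_of_crReducesToVoid h
  rw [hrows.rank_matrix, Fintype.card_fin]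

/-- If `Q` is an `m × n` real matrix with `m ≤ n` and the column reduction
procedure applied to `Q.transpose` terminates in the void matrix, then `Q` has full rank `m`. -/
theorem stmt_0 {m n : ℕ} (hmn : m ≤ n) (Q : Matrix (Fin m) (Fin n) ℝ)
    (h : crReducesToVoid Q.transpose) : Q.rank = m :=
  stmt_0_general Q h
end

section
/- Let W be a two-dimensional subspace of C⁰[a,b] (with a < b) such that every nonzero element of W has at most one zero in [a,b] (i.e., W is a Chebyshev space on [a,b]). Then there exist U, V ∈ W with U(a) > 0, U(b) = 0, V(a) = 0, and V(b) > 0. -/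
/-- If `W` is a two-dimensional Chebyshev subspace of `C⁰[a,b]` (every nonzero
element has at most one zero in `[a,b]`), then there exist `U, V ∈ W` with
`U(a) > 0`, `U(b) = 0`, `V(a) = 0`, `V(b) > 0`. -/
theorem stmt_3 {a b : ℝ} (hab : a < b)
    (W : Submodule ℝ (ContinuousMap (Set.Icc a b) ℝ))
    (hdim : Module.finrank ℝ W = 2)
    (hcheb : ∀ w : ContinuousMap (Set.Icc a b) ℝ, w ∈ W → w ≠ 0 →
      {x : Set.Icc a b | w x = 0}.Subsingleton) :
    ∃ U ∈ W, ∃ V ∈ W,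
      U ⟨a, Set.left_mem_Icc.mpr hab.le⟩ > 0 ∧
      U ⟨b, Set.right_mem_Icc.mpr hab.le⟩ = 0 ∧
      V ⟨a, Set.left_mem_Icc.mpr hab.le⟩ = 0 ∧
      V ⟨b, Set.right_mem_Icc.mpr hab.le⟩ > 0 := by
  set pa : Set.Icc a b := ⟨a, Set.left_mem_Icc.mpr hab.le⟩
  set pb : Set.Icc a b := ⟨b, Set.right_mem_Icc.mpr hab.le⟩
  have hpab : pa ≠ pb := by
    simp only [pa, pb, ne_eq, Subtype.mk.injEq]
    exact hab.ne
  haveI : FiniteDimensional ℝ W := FiniteDimensional.of_finrank_eq_succ hdim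
  let φ : W →ₗ[ℝ] ℝ × ℝ :=
    { toFun := fun w => (w.1 pa, w.1 pb)
      map_add' := fun w w' => by simp
      map_smul' := fun c w => by simp }
  have hinj : Function.Injective φ := by
    rw [← LinearMap.ker_eq_bot, LinearMap.ker_eq_bot']
    intro w hw
    by_contra hne
    have hw0 : (w : ContinuousMap (Set.Icc a b) ℝ) ≠ 0 := by
      simpa [Submodule.coe_eq_zero] using hne
    have h1 : (w : ContinuousMap (Set.Icc a b) ℝ) pa = 0 := congrArg Prod.fst hw
    have h2 : (w : ContinuousMap (Set.Icc a b) ℝ) pb = 0 := congrArg Prod.snd hw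
    exact hpab (hcheb w w.2 hw0 h1 h2)
  have hsurj : Function.Surjective φ := by
    have : Module.finrank ℝ W = Module.finrank ℝ (ℝ × ℝ) := by
      simp [hdim]
    exact (LinearMap.injective_iff_surjective_of_finrank_eq_finrank this).mp hinj
  obtain ⟨U, hU⟩ := hsurj (1, 0)
  obtain ⟨V, hV⟩ := hsurj (0, 1)
  refine ⟨U, U.2, V, V.2, ?_, ?_, ?_, ?_⟩
  · have := congrArg Prod.fst hU; simp [φ] at this; simp [this]
  · have := congrArg Prod.snd hU; simp [φ] at this; simp [this]
  · have := congrArg Prod.fst hV; simp [φ] at this; simp [this]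
  · have := congrArg Prod.snd hV; simp [φ] at this; simp [this]
end

section
/- Let C be a real n × n̂ matrix, and suppose that for every nonempty subset A of rows, the 'influence submatrix' C(A) — obtained from C by keeping only the rows in A and then deleting all columns that are entirely zero on those rows — has at least one column containing exactly one nonzero entry (equivalently, C(A) is never a 2-influence submatrix, where a 2-influence submatrix is one in which every column has at least 2 nonzero entries). Then the column reduction procedure applied to Cᵀ terminates in the void matrix; in particular C has full rank n when n ≤ n̂. -/
open scoped Classical

/-!
Each column reduction step on `Cᵀ` deletes every column that is the only nonzero entry of some
surviving row. The surviving rows always include every row meeting a surviving column, so the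
hypothesis applied to the set `S` of surviving columns of `Cᵀ` (that is, rows of `C`) produces such
a row as long as `S` is nonempty. Hence `S` shrinks at every step and is empty after `n` steps.
For the rank: in a vanishing combination `∑ g i • C i`, a column with a single nonzero entry on
the support of `g` forces that coefficient to vanish.
-/

open Finset Matrix

variable {ι κ R : Type*}

/-- Column `j` of the influence submatrix `M(A)` has its only nonzero entry in row `i`, so `M(A)`
is not a 2-influence submatrix. -/
def Matrix.HasNoTwoInfluenceSubmatrix [Zero R] (M : Matrix ι κ R) : Prop :=
  ∀ A : Finset ι, A.Nonempty → ∃ j, ∃ i ∈ A, M i j ≠ 0 ∧ ∀ i' ∈ A, i' ≠ i → M i' j = 0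

theorem Matrix.hasNoTwoInfluenceSubmatrix_of_card_filter_eq_one [Zero R] [DecidableEq R]
    {M : Matrix ι κ R}
    (h : ∀ A : Finset ι, A.Nonempty → ∃ j, (A.filter (fun i => M i j ≠ 0)).card = 1) :
    M.HasNoTwoInfluenceSubmatrix := by
  intro A hA
  obtain ⟨j, hj⟩ := h A hA
  obtain ⟨i, hi⟩ := card_eq_one.mp hj
  have hmem (i' : ι) : i' ∈ A ∧ M i' j ≠ 0 ↔ i' = i := by
    simpa using Finset.ext_iff.mp hi i'
  obtain ⟨hiA, hij⟩ := (hmem i).mpr rfl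
  refine ⟨j, i, hiA, hij, fun i' hi'A hi' => ?_⟩
  by_contra hne
  exact hi' ((hmem i').mp ⟨hi'A, hne⟩)

theorem Matrix.HasNoTwoInfluenceSubmatrix.linearIndependent_row [Fintype ι] [CommRing R]
    [NoZeroDivisors R] {M : Matrix ι κ R} (hM : M.HasNoTwoInfluenceSubmatrix) :
    LinearIndependent R M.row := by
  classical
  refine Fintype.linearIndependent_iff.mpr fun g hg => ?_
  by_contra! hsupp
  obtain ⟨i₀, hi₀⟩ := hsupp
  obtain ⟨j, i, hiA, hij, hzero⟩ := hM (univ.filter fun i => g i ≠ 0) ⟨i₀, by simpa using hi₀⟩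
  have hsum : ∑ i', g i' * M i' j = g i * M i j := by
    refine sum_eq_single i (fun i' _ hi' => ?_) (by simp)
    by_cases hgi' : g i' = 0
    · simp [hgi']
    · simp [hzero i' (by simpa using hgi') hi']
  have hcol : ∑ i', g i' * M i' j = 0 := by simpa using congrFun hg j
  exact mul_ne_zero (mem_filter.mp hiA).2 hij (hsum ▸ hcol)

section ColumnReduction

variable {m n : ℕ}

def RowsCover (Q : Matrix (Fin m) (Fin n) ℝ) (st : Finset (Fin m) × Finset (Fin n)) : Prop :=
  ∀ i, ∀ j ∈ st.2, Q i j ≠ 0 → i ∈ st.1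

theorem snd_crStep_subset (Q : Matrix (Fin m) (Fin n) ℝ) (st : Finset (Fin m) × Finset (Fin n)) :
    (crStep Q st).2 ⊆ st.2 :=
  sdiff_subset

theorem crStep_of_snd_eq_empty (Q : Matrix (Fin m) (Fin n) ℝ) (R : Finset (Fin m)) :
    crStep Q (R, ∅) = (∅, ∅) := by
  simp [crStep]

theorem rowsCover_crStep {Q : Matrix (Fin m) (Fin n) ℝ} {st : Finset (Fin m) × Finset (Fin n)}
    (hst : RowsCover Q st) : RowsCover Q (crStep Q st) :=
  fun i j hj hij => mem_filter.mpr ⟨hst i j (snd_crStep_subset Q st hj) hij, j, hj, hij⟩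

theorem card_snd_crStep_lt {C : Matrix (Fin n) (Fin m) ℝ}
    (hC : C.HasNoTwoInfluenceSubmatrix) {st : Finset (Fin m) × Finset (Fin n)}
    (hst : RowsCover Cᵀ st) (hne : st.2.Nonempty) : (crStep Cᵀ st).2.card < st.2.card := by
  obtain ⟨i, j, hj, hji, hzero⟩ := hC st.2 hne
  have hremoved : j ∉ (crStep Cᵀ st).2 := fun hj' =>
    (mem_sdiff.mp hj').2 (mem_filter.mpr ⟨hj, i, hst i j hj hji, hji, hzero⟩)
  exact card_lt_card ((ssubset_iff_of_subset (snd_crStep_subset _ st)).mpr ⟨j, hj, hremoved⟩)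

theorem crReducesToVoid_transpose {C : Matrix (Fin n) (Fin m) ℝ}
    (hC : C.HasNoTwoInfluenceSubmatrix) : crReducesToVoid Cᵀ := by
  set st : ℕ → Finset (Fin m) × Finset (Fin n) := fun k => (crStep Cᵀ)^[k] (univ, univ)
  have hst_succ (k : ℕ) : st (k + 1) = crStep Cᵀ (st k) := Function.iterate_succ_apply' _ _ _
  have hcover (k : ℕ) : RowsCover Cᵀ (st k) := by
    induction k with
    | zero => exact fun i _ _ _ => mem_univ i
    | succ k ih => exact hst_succ k ▸ rowsCover_crStep ih
  have hcard (k : ℕ) : (st k).2.card ≤ n - k := by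
    induction k with
    | zero => simpa using card_le_univ (st 0).2
    | succ k ih =>
      rw [hst_succ]
      rcases (st k).2.eq_empty_or_nonempty with hempty | hne
      · simp [subset_empty.mp (hempty ▸ snd_crStep_subset Cᵀ (st k))]
      · have := card_snd_crStep_lt hC (hcover k) hne
        omega
  have hvoid : (st n).2 = ∅ := card_eq_zero.mp (by simpa using hcard n)
  refine ⟨n + 1, ?_⟩
  change st (n + 1) = (∅, ∅)
  rw [hst_succ, ← Prod.mk.eta (p := st n), hvoid, crStep_of_snd_eq_empty]

end ColumnReduction

/-- If for every nonempty set `A` of rows the influence submatrix `C(A)` has some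
column with exactly one nonzero entry (i.e. `C(A)` is never a 2-influence
submatrix), then the column reduction procedure applied to `C.transpose` terminates in
the void matrix; in particular `C` has full rank `n` when `n ≤ n̂`. -/
theorem stmt_11 {n nh : ℕ} (C : Matrix (Fin n) (Fin nh) ℝ)
    (h : ∀ A : Finset (Fin n), A.Nonempty →
      ∃ j : Fin nh, (∃ i ∈ A, C i j ≠ 0) ∧ (A.filter (fun i => C i j ≠ 0)).card = 1) :
    crReducesToVoid C.transpose ∧ (n ≤ nh → C.rank = n) := by
  have hC : C.HasNoTwoInfluenceSubmatrix :=
    Matrix.hasNoTwoInfluenceSubmatrix_of_card_filter_eq_one fun A hA =>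
      (h A hA).imp fun _ => And.right
  refine ⟨crReducesToVoid_transpose hC, fun _ => ?_⟩
  simpa using hC.linearIndependent_row.rank_matrix
end

section
/- Let I₁ = {i₁ < i₂ < … < i_{p+1}} and I₂ = {j₁ < j₂ < … < j_{p+1}} be two sets of p+1 integers each that 'overlap': every k ∈ I₁ with j₁ ≤ k ≤ j_{p+1} belongs to I₂, and every k ∈ I₂ with i₁ ≤ k ≤ i_{p+1} belongs to I₁. If I₁ ≠ I₂, then i₁ ≠ j₁ and i_{p+1} ≠ j_{p+1}. -/
/-- If two distinct `(p+1)`-element integer index sets overlap (each element of one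
lying between the extremes of the other belongs to the other), then they differ
both in their minimum and in their maximum. -/
theorem stmt_13 {p : ℕ} (I₁ I₂ : Finset ℤ)
    (h₁ : I₁.Nonempty) (h₂ : I₂.Nonempty)
    (hc₁ : I₁.card = p + 1) (hc₂ : I₂.card = p + 1)
    (hov₁ : ∀ k ∈ I₁, I₂.min' h₂ ≤ k → k ≤ I₂.max' h₂ → k ∈ I₂)
    (hov₂ : ∀ k ∈ I₂, I₁.min' h₁ ≤ k → k ≤ I₁.max' h₁ → k ∈ I₁)
    (hne : I₁ ≠ I₂) :
    I₁.min' h₁ ≠ I₂.min' h₂ ∧ I₁.max' h₁ ≠ I₂.max' h₂ := by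
  constructor
  · intro hmin
    apply hne
    rcases le_total (I₁.max' h₁) (I₂.max' h₂) with hm | hm
    · exact Finset.eq_of_subset_of_card_le
        (fun k hk => hov₁ k hk
          (by have := Finset.min'_le I₁ k hk; omega)
          (le_trans (Finset.le_max' I₁ k hk) hm))
        (by omega)
    · exact (Finset.eq_of_subset_of_card_le
        (fun k hk => hov₂ k hk
          (by have := Finset.min'_le I₂ k hk; omega)
          (le_trans (Finset.le_max' I₂ k hk) hm))
        (by omega)).symm
  · intro hmax
    apply hne
    rcases le_total (I₂.min' h₂) (I₁.min' h₁) with hm | hm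
    · exact Finset.eq_of_subset_of_card_le
        (fun k hk => hov₁ k hk
          (le_trans hm (Finset.min'_le I₁ k hk))
          (by have := Finset.le_max' I₁ k hk; omega))
        (by omega)
    · exact (Finset.eq_of_subset_of_card_le
        (fun k hk => hov₂ k hk
          (le_trans hm (Finset.min'_le I₂ k hk))
          (by have := Finset.le_max' I₂ k hk; omega))
        (by omega)).symm
end
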